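/- arXiv:math/0002171 — 3 statements merged into one kernel-verified Lean document; each statement's English description precedes it below -/
import Mathlib

section
/- If x > 0 then e^{−x}/(1 − e^{−x})² < 1/x², and if 0 < x ≤ 1 then e^{−x}/(1 − e^{−x})² > 1/x² − 2. -/
/-!
Multiplying numerator and denominator by `e^x` turns `e^{-x}/(1 - e^{-x})²` into
`1/(2 sinh(x/2))²`. The upper bound is then `sinh y > y`. For the lower bound, `cosh y ≤ e^{y²/2}`
and `e^t ≤ 1/(1 - t)` give `sinh² y ≤ y²/(1 - y²)`, hence `1/(2 sinh(x/2))² ≥ 1/x² - 1/4`.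
-/

open Real

namespace Real

lemma two_sinh_half_sq (x : ℝ) : (2 * sinh (x / 2)) ^ 2 = exp x * (1 - exp (-x)) ^ 2 := by
  have hsplit : exp x = exp (x / 2) * exp (x / 2) := by rw [← exp_add]; ring_nf
  have hneg : exp (-x) = exp (-(x / 2)) * exp (-(x / 2)) := by rw [← exp_add]; ring_nf
  have hinv : exp (x / 2) * exp (-(x / 2)) = 1 := by rw [← exp_add]; simp
  rw [sinh_eq, hsplit, hneg]
  linear_combination (2 * exp (x / 2) * exp (-(x / 2))
    - exp (-(x / 2)) ^ 2 * (exp (x / 2) * exp (-(x / 2)) + 1)) * hinv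

lemma exp_neg_div_one_sub_exp_neg_sq (x : ℝ) :
    exp (-x) / (1 - exp (-x)) ^ 2 = 1 / (2 * sinh (x / 2)) ^ 2 := by
  rw [two_sinh_half_sq, one_div, mul_inv, ← exp_neg, div_eq_mul_inv]

lemma sq_lt_two_sinh_half_sq {x : ℝ} (hx : 0 < x) : x ^ 2 < (2 * sinh (x / 2)) ^ 2 := by
  have hsinh : x / 2 < sinh (x / 2) := self_lt_sinh_iff.2 (half_pos hx)
  exact pow_lt_pow_left₀ (by linarith) hx.le two_ne_zero

lemma sinh_sq_le_sq_div_one_sub_sq {y : ℝ} (hy : y ^ 2 < 1) :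
    sinh y ^ 2 ≤ y ^ 2 / (1 - y ^ 2) := by
  have hcosh : cosh y ^ 2 ≤ exp (y ^ 2) :=
    calc cosh y ^ 2 ≤ exp (y ^ 2 / 2) ^ 2 :=
          pow_le_pow_left₀ (cosh_pos y).le (cosh_le_exp_half_sq y) 2
      _ = exp (y ^ 2) := by rw [← exp_nat_mul]; ring_nf
  have hexp : exp (y ^ 2) ≤ 1 / (1 - y ^ 2) := exp_bound_div_one_sub_of_interval (sq_nonneg y) hy
  have hpos : 0 < 1 - y ^ 2 := by linarith
  rw [sinh_sq]
  calc cosh y ^ 2 - 1 ≤ 1 / (1 - y ^ 2) - 1 := by linarith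
    _ = y ^ 2 / (1 - y ^ 2) := by field_simp; ring

lemma one_div_sq_sub_quarter_le_one_div_two_sinh_half_sq {x : ℝ} (hx₀ : 0 < x) (hx₂ : x < 2) :
    1 / x ^ 2 - 1 / 4 ≤ 1 / (2 * sinh (x / 2)) ^ 2 := by
  have hquarter : 0 < 1 - (x / 2) ^ 2 := by nlinarith
  have hsinh : (2 * sinh (x / 2)) ^ 2 ≤ x ^ 2 / (1 - (x / 2) ^ 2) := by
    have := sinh_sq_le_sq_div_one_sub_sq (y := x / 2) (by nlinarith)
    calc (2 * sinh (x / 2)) ^ 2 = 4 * sinh (x / 2) ^ 2 := by ring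
      _ ≤ 4 * ((x / 2) ^ 2 / (1 - (x / 2) ^ 2)) := by gcongr
      _ = x ^ 2 / (1 - (x / 2) ^ 2) := by ring
  calc 1 / x ^ 2 - 1 / 4 = 1 / (x ^ 2 / (1 - (x / 2) ^ 2)) := by field_simp; ring
    _ ≤ 1 / (2 * sinh (x / 2)) ^ 2 :=
      one_div_le_one_div_of_le (pow_pos hx₀ 2 |>.trans (sq_lt_two_sinh_half_sq hx₀)) hsinh

end Real

theorem stmt_7 (x : ℝ) (hx : 0 < x) :
    Real.exp (-x) / (1 - Real.exp (-x)) ^ 2 < 1 / x ^ 2 ∧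
      (x ≤ 1 → 1 / x ^ 2 - 2 < Real.exp (-x) / (1 - Real.exp (-x)) ^ 2) := by
  rw [exp_neg_div_one_sub_exp_neg_sq]
  refine ⟨one_div_lt_one_div_of_lt (pow_pos hx 2) (sq_lt_two_sinh_half_sq hx), fun hx₁ => ?_⟩
  have := one_div_sq_sub_quarter_le_one_div_two_sinh_half_sq hx (by linarith)
  linarith
end

section
/- Let m, ℓ be positive integers, let ϑ > −1 be a real number, let c_0 = π√(2ℓ/(3m)) and c_1 = √(1+ϑ)·c_0, and let r be an integer with 1 ≤ r ≤ m. Then for every positive integer n, Σ_{k=1}^{∞} m·e^{−c_1 k (r+m)/(2√n)} / (1 − e^{−c_1 k m/(2√n)})² < n/((1+ϑ)ℓ). -/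
open Real

/-!
With `t = a (k + 1) m`, the `k`-th term is at most `m e^{-t} / (1 - e^{-t})^2 = m / (4 sinh² (t/2))`,
which is `< m / t^2` because `sinh x > x` for `x > 0`. Hence the series is dominated termwise by
`(a² m)⁻¹ ∑ 1/(k+1)² = π² / (6 a² m)`, and for `a = c₁ / (2 √n)` this bound is exactly
`n / ((1 + ϑ) ℓ)`.
-/

theorem one_sub_exp_neg_sq (t : ℝ) : (1 - exp (-t)) ^ 2 = 4 * exp (-t) * sinh (t / 2) ^ 2 := by
  have h : exp (-t) = exp (-(t / 2)) ^ 2 := by rw [← exp_nat_mul]; ring_nf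
  rw [sinh_eq, h]
  have : exp (t / 2) * exp (-(t / 2)) = 1 := by rw [← exp_add]; simp
  linear_combination -(1 + exp (t / 2) * exp (-(t / 2)) - 2 * exp (-(t / 2)) ^ 2) * this

theorem exp_neg_div_one_sub_exp_neg_sq_lt {t : ℝ} (ht : 0 < t) :
    exp (-t) / (1 - exp (-t)) ^ 2 < 1 / t ^ 2 := by
  have hsinh : t / 2 < sinh (t / 2) := self_lt_sinh_iff.mpr (by positivity)
  rw [one_sub_exp_neg_sq, mul_comm 4, mul_assoc, div_mul_cancel_left₀ (exp_pos _).ne']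
  calc (4 * sinh (t / 2) ^ 2)⁻¹ < (4 * (t / 2) ^ 2)⁻¹ := by gcongr
    _ = 1 / t ^ 2 := by ring

theorem hasSum_one_div_nat_succ_sq :
    HasSum (fun k : ℕ => 1 / ((k : ℝ) + 1) ^ 2) (π ^ 2 / 6) := by
  simpa using (hasSum_nat_add_iff' 1).mpr hasSum_zeta_two

section

variable {a m r : ℝ}

theorem mul_exp_neg_div_one_sub_exp_neg_sq_lt (ha : 0 < a) (hm : 0 < m) (hr : 0 ≤ r) (k : ℕ) :
    m * exp (-(a * (k + 1) * (r + m))) / (1 - exp (-(a * (k + 1) * m))) ^ 2 <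
      1 / (a ^ 2 * m) * (1 / ((k : ℝ) + 1) ^ 2) := by
  set t := a * (k + 1) * m
  have ht : 0 < t := by positivity
  calc m * exp (-(a * (k + 1) * (r + m))) / (1 - exp (-t)) ^ 2
      ≤ m * (exp (-t) / (1 - exp (-t)) ^ 2) := by
        rw [mul_div_assoc]
        gcongr
        nlinarith [mul_nonneg (by positivity : (0 : ℝ) ≤ a * (k + 1)) hr]
    _ < m * (1 / t ^ 2) := mul_lt_mul_of_pos_left (exp_neg_div_one_sub_exp_neg_sq_lt ht) hm
    _ = 1 / (a ^ 2 * m) * (1 / ((k : ℝ) + 1) ^ 2) := by simp only [t]; field_simp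

theorem tsum_mul_exp_neg_div_one_sub_exp_neg_sq_lt (ha : 0 < a) (hm : 0 < m) (hr : 0 ≤ r) :
    ∑' k : ℕ, m * exp (-(a * (k + 1) * (r + m))) / (1 - exp (-(a * (k + 1) * m))) ^ 2 <
      π ^ 2 / (6 * a ^ 2 * m) := by
  have hbound := hasSum_one_div_nat_succ_sq.mul_left (1 / (a ^ 2 * m))
  have hnonneg (k : ℕ) :
      0 ≤ m * exp (-(a * (k + 1) * (r + m))) / (1 - exp (-(a * (k + 1) * m))) ^ 2 := by
    positivity
  have hlt := mul_exp_neg_div_one_sub_exp_neg_sq_lt ha hm hr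
  calc _ < ∑' k : ℕ, 1 / (a ^ 2 * m) * (1 / ((k : ℝ) + 1) ^ 2) :=
        Summable.tsum_lt_tsum (fun k => (hlt k).le) (hlt 0)
          (hbound.summable.of_nonneg_of_le hnonneg fun k => (hlt k).le) hbound.summable
    _ = π ^ 2 / (6 * a ^ 2 * m) := by rw [hbound.tsum_eq]; field_simp

end

theorem stmt_13_general (m ℓ : ℕ) (hm : 0 < m) (hℓ : 0 < ℓ)
    (ϑ : ℝ) (hϑ : -1 < ϑ) (c₀ c₁ : ℝ)
    (hc₀ : c₀ = π * Real.sqrt (2 * ℓ / (3 * m)))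
    (hc₁ : c₁ = Real.sqrt (1 + ϑ) * c₀)
    (r : ℕ) (n : ℕ) (hn : 0 < n) :
    (∑' k : ℕ,
        (m : ℝ) * Real.exp (-(c₁ * (k + 1) * (r + m)) / (2 * Real.sqrt n)) /
          (1 - Real.exp (-(c₁ * (k + 1) * m) / (2 * Real.sqrt n))) ^ 2) <
      (n : ℝ) / ((1 + ϑ) * ℓ) := by
  have hϑ_pos : 0 < 1 + ϑ := by linarith
  have hc₁_sq : c₁ ^ 2 = (1 + ϑ) * π ^ 2 * (2 * ℓ / (3 * m)) := by
    rw [hc₁, hc₀, mul_pow, mul_pow, sq_sqrt hϑ_pos.le, sq_sqrt (by positivity)]; ring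
  have hc₁_pos : 0 < c₁ := by rw [hc₁, hc₀]; positivity
  have key := tsum_mul_exp_neg_div_one_sub_exp_neg_sq_lt (div_pos hc₁_pos (by positivity : (0 : ℝ) < 2 * √n))
    (Nat.cast_pos.mpr hm) r.cast_nonneg
  have harg (x : ℝ) : -(c₁ * x) / (2 * √n) = -(c₁ / (2 * √n) * x) := by ring
  convert key using 1
  · simp only [mul_assoc, harg]
  · rw [div_pow, mul_pow, sq_sqrt (Nat.cast_nonneg n), hc₁_sq]
    field_simp
    ring

theorem stmt_13 (m ℓ : ℕ) (hm : 0 < m) (hℓ : 0 < ℓ)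
    (ϑ : ℝ) (hϑ : -1 < ϑ) (c₀ c₁ : ℝ)
    (hc₀ : c₀ = π * Real.sqrt (2 * ℓ / (3 * m)))
    (hc₁ : c₁ = Real.sqrt (1 + ϑ) * c₀)
    (r : ℕ) (hr1 : 1 ≤ r) (hrm : r ≤ m) (n : ℕ) (hn : 0 < n) :
    (∑' k : ℕ,
        (m : ℝ) * Real.exp (-(c₁ * (k + 1) * (r + m)) / (2 * Real.sqrt n)) /
          (1 - Real.exp (-(c₁ * (k + 1) * m) / (2 * Real.sqrt n))) ^ 2) <
      (n : ℝ) / ((1 + ϑ) * ℓ) :=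
  stmt_13_general m ℓ hm hℓ ϑ hϑ c₀ c₁ hc₀ hc₁ r n hn
end

section
/- Let A be a set of positive integers, and let c_1 and N_0 be positive real numbers. Then there is a constant C such that for every integer n ≥ 2N_0, 0 < Σ_{k,a : ka > n − N_0} a·e^{−c_1 k a/(2√n)} ≤ C/√n, where the sum is over all positive integers k and all a ∈ A with ka > n − N_0. -/
/-!
Put `t = c₁ / (8 √n)`, so that the summand is `a e^{-4tka}`. For `k, a ≥ 1` with
`ka ≥ m := n / 2` (which `ka > n - N₀` and `n ≥ 2 N₀` give), split `4tka` into four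
quarters: one absorbs the factor `a` (as `a e^{-ta} ≤ 1/t`), two are at least `tk` and `ta`,
and the last is at least `tm`. Hence the sum is at most `e^{-tm} / t` times a product of two
geometric series, that is at most `e^{2t - tm} / t³ = O(n^{3/2} e^{-c₁ √n / 16}) = O(1 / √n)`.
The sum is positive because of the term `(k, a) = (n, a₀)` for any `a₀ ∈ A`.
-/

open Real

lemma mul_exp_neg_mul_le {t : ℝ} (ht : 0 < t) (x : ℝ) : x * exp (-(t * x)) ≤ 1 / t := by
  rw [le_div_iff₀ ht]
  calc x * exp (-(t * x)) * t = t * x * exp (-(t * x)) := by ring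
    _ ≤ exp (-1) := mul_exp_neg_le_exp_neg_one _
    _ ≤ 1 := exp_le_one_iff.mpr (by norm_num)

lemma inv_one_sub_exp_neg_le {t : ℝ} (ht : 0 < t) : (1 - exp (-t))⁻¹ ≤ exp t / t := by
  rw [← inv_div]
  apply inv_anti₀ (by positivity)
  rw [div_le_iff₀ (exp_pos t), sub_mul, one_mul, ← exp_add, neg_add_cancel, exp_zero]
  linarith [add_one_le_exp t]

lemma pow_mul_exp_neg_le {x : ℝ} (hx : 0 < x) (n : ℕ) :
    x ^ n * exp (-x) ≤ (n + 1).factorial / x := by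
  rw [le_div_iff₀ hx, exp_neg, mul_right_comm, ← pow_succ, ← div_eq_mul_inv,
    div_le_iff₀ (exp_pos x)]
  have := pow_div_factorial_le_exp _ hx.le (n + 1)
  rwa [div_le_iff₀ (by positivity), mul_comm] at this

lemma mul_exp_neg_le_of_le_mul {t k a m : ℝ} (ht : 0 < t) (hk : 1 ≤ k) (ha : 1 ≤ a)
    (hm : m ≤ k * a) :
    a * exp (-(4 * t * k * a)) ≤ exp (-(t * m)) * (exp (-(t * k)) * exp (-(t * a))) / t := by
  have hsplit : exp (-(4 * t * k * a)) = exp (-(t * (k * a))) * exp (-(t * (k * a))) *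
      exp (-(t * (k * a))) * exp (-(t * (k * a))) := by
    simp only [← exp_add]; ring_nf
  have ha' : a * exp (-(t * (k * a))) ≤ 1 / t :=
    calc a * exp (-(t * (k * a))) ≤ a * exp (-(t * a)) := by gcongr; nlinarith
      _ ≤ 1 / t := mul_exp_neg_mul_le ht a
  calc a * exp (-(4 * t * k * a))
      = a * exp (-(t * (k * a))) * exp (-(t * (k * a))) * exp (-(t * (k * a))) *
          exp (-(t * (k * a))) := by rw [hsplit]; ring
    _ ≤ 1 / t * exp (-(t * k)) * exp (-(t * a)) * exp (-(t * m)) := by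
        gcongr <;> nlinarith
    _ = exp (-(t * m)) * (exp (-(t * k)) * exp (-(t * a))) / t := by ring

lemma hasSum_pow_mul_pow {r : ℝ} (h0 : 0 ≤ r) (h1 : r < 1) :
    HasSum (fun p : ℕ × ℕ => r ^ p.1 * r ^ p.2) ((1 - r)⁻¹ * (1 - r)⁻¹) :=
  have hgeo := hasSum_geometric_of_lt_one h0 h1
  hgeo.mul hgeo (hgeo.summable.mul_of_nonneg hgeo.summable (fun _ => by positivity)
    (fun _ => by positivity))

section

variable {P : ℕ × ℕ → Prop} {t m : ℝ}

lemma mul_exp_neg_le_pow_mul_pow (ht : 0 < t)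
    (hP : ∀ p, P p → 0 < p.1 ∧ 0 < p.2 ∧ m ≤ p.1 * p.2) (p : {p // P p}) :
    (p.1.2 : ℝ) * exp (-(4 * t * p.1.1 * p.1.2)) ≤
      exp (-(t * m)) / t * (exp (-t) ^ p.1.1 * exp (-t) ^ p.1.2) := by
  obtain ⟨hk, ha, hm⟩ := hP p.1 p.2
  refine (mul_exp_neg_le_of_le_mul ht (by exact_mod_cast hk) (by exact_mod_cast ha) hm).trans_eq
    ?_
  simp only [← exp_nat_mul]
  ring_nf

lemma summable_mul_exp_neg (ht : 0 < t)
    (hP : ∀ p, P p → 0 < p.1 ∧ 0 < p.2 ∧ m ≤ p.1 * p.2) :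
    Summable fun p : {p // P p} => (p.1.2 : ℝ) * exp (-(4 * t * p.1.1 * p.1.2)) :=
  .of_nonneg_of_le (fun _ => by positivity) (mul_exp_neg_le_pow_mul_pow ht hP)
    (((hasSum_pow_mul_pow (exp_pos _).le (exp_lt_one_iff.mpr (by linarith))).summable.subtype
      _).mul_left _)

lemma tsum_mul_exp_neg_le (ht : 0 < t)
    (hP : ∀ p, P p → 0 < p.1 ∧ 0 < p.2 ∧ m ≤ p.1 * p.2) :
    ∑' p : {p // P p}, (p.1.2 : ℝ) * exp (-(4 * t * p.1.1 * p.1.2)) ≤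
      exp (2 * t - t * m) / t ^ 3 := by
  have hgeo := hasSum_pow_mul_pow (exp_pos (-t)).le (exp_lt_one_iff.mpr (by linarith))
  have hinv := inv_one_sub_exp_neg_le ht
  have hinv0 : 0 ≤ (1 - exp (-t))⁻¹ := by simp [exp_le_one_iff, ht.le]
  calc ∑' p : {p // P p}, (p.1.2 : ℝ) * exp (-(4 * t * p.1.1 * p.1.2))
      ≤ ∑' p : {p // P p}, exp (-(t * m)) / t * (exp (-t) ^ p.1.1 * exp (-t) ^ p.1.2) :=
        (summable_mul_exp_neg ht hP).tsum_le_tsum (mul_exp_neg_le_pow_mul_pow ht hP)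
          ((hgeo.summable.subtype _).mul_left _)
    _ ≤ exp (-(t * m)) / t * ((1 - exp (-t))⁻¹ * (1 - exp (-t))⁻¹) := by
        rw [tsum_mul_left, ← hgeo.tsum_eq]
        gcongr
        exact hgeo.summable.tsum_subtype_le _ {p | P p} (fun _ => by positivity)
    _ ≤ exp (-(t * m)) / t * (exp t / t * (exp t / t)) := by gcongr
    _ = exp (2 * t - t * m) / t ^ 3 := by
        rw [sub_eq_add_neg, two_mul, exp_add, exp_add]; field_simp

end

lemma exp_sub_div_pow_le_div {c s : ℝ} (hc : 0 < c) (hs : 1 ≤ s) :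
    exp (2 * (c / (8 * s)) - c / (8 * s) * (s ^ 2 / 2)) / (c / (8 * s)) ^ 3 ≤
      3 * 2 ^ 28 * exp (c / 4) / c ^ 7 / s := by
  have hs0 : 0 < s := by linarith
  have hpoly := pow_mul_exp_neg_le (x := c * s / 16) (by positivity) 3
  have hexp : exp (c / (4 * s)) ≤ exp (c / 4) :=
    exp_le_exp.mpr (div_le_div_of_nonneg_left hc.le (by norm_num) (by linarith))
  calc exp (2 * (c / (8 * s)) - c / (8 * s) * (s ^ 2 / 2)) / (c / (8 * s)) ^ 3
      = exp (c / (4 * s)) * ((c * s / 16) ^ 3 * exp (-(c * s / 16))) * (2 ^ 21 / c ^ 6) := by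
        rw [sub_eq_add_neg, exp_add]
        field_simp
        ring_nf
    _ ≤ exp (c / 4) * ((3 + 1).factorial / (c * s / 16)) * (2 ^ 21 / c ^ 6) := by gcongr
    _ = 3 * 2 ^ 28 * exp (c / 4) / c ^ 7 / s := by
        simp only [Nat.factorial]; field_simp; ring

theorem stmt_14 (A : Set ℕ) (hA : A.Nonempty) (hpos : ∀ a ∈ A, 0 < a)
    (c₁ N₀ : ℝ) (hc₁ : 0 < c₁) (hN₀ : 0 < N₀) :
    ∃ C : ℝ, ∀ n : ℕ, 2 * N₀ ≤ (n : ℝ) →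
      0 < (∑' p : {p : ℕ × ℕ // 0 < p.1 ∧ p.2 ∈ A ∧ (n : ℝ) - N₀ < (p.1 * p.2 : ℕ)},
            ((p : ℕ × ℕ).2 : ℝ) *
              Real.exp (-(c₁ * (p : ℕ × ℕ).1 * (p : ℕ × ℕ).2) / (2 * Real.sqrt n))) ∧
        (∑' p : {p : ℕ × ℕ // 0 < p.1 ∧ p.2 ∈ A ∧ (n : ℝ) - N₀ < (p.1 * p.2 : ℕ)},
            ((p : ℕ × ℕ).2 : ℝ) *
              Real.exp (-(c₁ * (p : ℕ × ℕ).1 * (p : ℕ × ℕ).2) / (2 * Real.sqrt n))) ≤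
          C / Real.sqrt n := by
  obtain ⟨a₀, ha₀⟩ := hA
  refine ⟨3 * 2 ^ 28 * exp (c₁ / 4) / c₁ ^ 7, fun n hn => ?_⟩
  have hn1 : (1 : ℝ) ≤ n :=
    Nat.one_le_cast.mpr (Nat.cast_pos.mp (show (0 : ℝ) < n by linarith))
  have hs : 1 ≤ √(n : ℝ) := one_le_sqrt.mpr hn1
  have ht : 0 < c₁ / (8 * √(n : ℝ)) := by positivity
  have hP : ∀ p : ℕ × ℕ, (0 < p.1 ∧ p.2 ∈ A ∧ (n : ℝ) - N₀ < (p.1 * p.2 : ℕ)) →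
      0 < p.1 ∧ 0 < p.2 ∧ √(n : ℝ) ^ 2 / 2 ≤ p.1 * p.2 := by
    rintro p ⟨hk, ha, hka⟩
    rw [sq_sqrt (by linarith)]
    push_cast at hka
    exact ⟨hk, hpos _ ha, by linarith⟩
  have hexp : ∀ k a : ℝ,
      -(c₁ * k * a) / (2 * √(n : ℝ)) = -(4 * (c₁ / (8 * √(n : ℝ))) * k * a) := by
    intro k a; field_simp; ring
  simp only [hexp]
  have ha₀one : (1 : ℝ) ≤ a₀ := by exact_mod_cast hpos a₀ ha₀
  refine ⟨(summable_mul_exp_neg ht hP).tsum_pos (fun _ => by positivity)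
    ⟨(n, a₀), ?_, ha₀, ?_⟩ (mul_pos (zero_lt_one.trans_le ha₀one) (exp_pos _)), ?_⟩
  · exact_mod_cast hn1
  · push_cast; nlinarith
  · exact (tsum_mul_exp_neg_le ht hP).trans (exp_sub_div_pow_le_div hc₁ hs)
end
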